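/- arXiv:1210.6853 — 3 statements merged into one kernel-verified Lean document; each statement's English description precedes it below -/
import Mathlib

section
/- Let m ≥ 2 and k be integers with 1 ≤ k ≤ m/2. Set q = min(1, ln(k)/ln(m/k)) if k > 1 and q = 1/(2 ln m) if k = 1; set β = 1 if k ≥ √m, β = q/2 if 1 < k < √m, and β = q/(2√e) if k = 1. Let X = {x ∈ ℝ^m : 0 ≤ x_j ≤ 1 for all j, Σ_{j=1}^m x_j = k} and ω(x) = (4/(β(1+q)))·Σ_{j=1}^m x_j^{1+q}. Then ω is continuous and convex on X, and it is strongly convex with modulus 1 on X with respect to the norm on {x ∈ ℝ^m : Σ_j x_j = 0} whose unit ball is ½[X−X] := {(u−v)/2 : u, v ∈ X}. -/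
open Pointwise

/-!
On `[0, c]` the map `s ↦ s ^ (1 + q)` has second derivative
`q (1 + q) s ^ (q - 1) ≥ q (1 + q) c ^ (q - 1)`. With `c = 1` this makes `∑ j, x j ^ (1 + q)`
strongly convex on the cube with modulus `q (1 + q)` for the sup norm; with `c = u j + v j`,
Cauchy–Schwarz and the concavity of `s ↦ s ^ (1 - q)` bound its Jensen gap below by
`q (1 + q) / 2 · t (1 - t) ‖u - v‖₁² / (m ^ q (2k) ^ (1 - q))`.

The gauge of `½[X - X]` is at most `max (2‖x‖∞) (‖x‖₁ / k)`: after rescaling, the positive and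
negative parts of `x` can be padded by a common vector so that both land in `X`. The choice of
`q` and `β` gives `β m ^ q ≤ 2 q k ^ (1 + q)`, which is exactly what makes both lower bounds
dominate `½ t (1 - t)` times the squared gauge.
-/

section JensenGap

variable {E : Type*}

def jensenGap [AddCommGroup E] [Module ℝ E] (f : E → ℝ) (t : ℝ) (u v : E) : ℝ :=
  t * f u + (1 - t) * f v - f (t • u + (1 - t) • v)

variable [NormedAddCommGroup E] [NormedSpace ℝ E] {s : Set E} {m : ℝ} {f : E → ℝ}

theorem StrongConvexOn.mul_sq_le_jensenGap (hf : StrongConvexOn s m f) {u v : E} (hu : u ∈ s)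
    (hv : v ∈ s) {t : ℝ} (ht₀ : 0 ≤ t) (ht₁ : t ≤ 1) :
    t * (1 - t) * (m / 2 * ‖u - v‖ ^ 2) ≤ jensenGap f t u v := by
  have h := hf.2 hu hv ht₀ (sub_nonneg.2 ht₁) (add_sub_cancel t 1)
  simp only [smul_eq_mul] at h
  unfold jensenGap
  linarith

theorem strongConvexOn_of_mul_sq_le_jensenGap (hs : Convex ℝ s)
    (h : ∀ u ∈ s, ∀ v ∈ s, ∀ t : ℝ, 0 ≤ t → t ≤ 1 →
      t * (1 - t) * (m / 2 * ‖u - v‖ ^ 2) ≤ jensenGap f t u v) :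
    StrongConvexOn s m f := by
  refine ⟨hs, fun u hu v hv a b ha hb hab ↦ ?_⟩
  obtain rfl : b = 1 - a := by linarith
  have := h u hu v hv a ha (by linarith)
  simp only [jensenGap, smul_eq_mul] at this ⊢
  linarith

end JensenGap

theorem jensenGap_sum {ι : Type*} [Fintype ι] (g : ℝ → ℝ) (t : ℝ) (u v : ι → ℝ) :
    jensenGap (fun x : ι → ℝ ↦ ∑ j, g (x j)) t u v = ∑ j, jensenGap g t (u j) (v j) := by
  simp only [jensenGap, Finset.mul_sum, Finset.sum_sub_distrib, Finset.sum_add_distrib,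
    Pi.add_apply, Pi.smul_apply, smul_eq_mul]

theorem strongConvexOn_rpow_one_add {q c : ℝ} (hq₀ : 0 ≤ q) (hq₁ : q ≤ 1) :
    StrongConvexOn (Set.Icc 0 c) (q * (1 + q) * c ^ (q - 1)) fun s : ℝ ↦ s ^ (1 + q) := by
  set K := q * (1 + q) * c ^ (q - 1)
  simp_rw [strongConvexOn_iff_convex, Real.norm_eq_abs, sq_abs]
  refine convexOn_of_hasDerivWithinAt2_nonneg (convex_Icc 0 c)
    (f' := fun s ↦ (1 + q) * s ^ q - K * s) (f'' := fun s ↦ q * (1 + q) * s ^ (q - 1) - K)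
    ?_ ?_ ?_ ?_
  · exact ((Real.continuous_rpow_const (by linarith)).sub (by fun_prop)).continuousOn
  · rw [interior_Icc]
    intro x hx
    have h := (Real.hasDerivAt_rpow_const (p := 1 + q) (Or.inl hx.1.ne')).sub
      ((hasDerivAt_pow 2 x).const_mul (K / 2))
    exact (h.congr_deriv (by rw [add_sub_cancel_left]; push_cast; ring)).hasDerivWithinAt
  · rw [interior_Icc]
    intro x hx
    have h := ((Real.hasDerivAt_rpow_const (p := q) (Or.inl hx.1.ne')).const_mul (1 + q)).sub
      ((hasDerivAt_id x).const_mul K)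
    exact (h.congr_deriv (by ring)).hasDerivWithinAt
  · rw [interior_Icc]
    intro x hx
    have : c ^ (q - 1) ≤ x ^ (q - 1) := Real.rpow_le_rpow_of_nonpos hx.1 hx.2.le (by linarith)
    exact sub_nonneg.2 (mul_le_mul_of_nonneg_left this (by positivity))

theorem sum_rpow_le_card_rpow_mul_rpow_sum {ι : Type*} [Fintype ι] {p : ℝ} (hp₀ : 0 ≤ p)
    (hp₁ : p ≤ 1) {c : ι → ℝ} (hc : ∀ j, 0 ≤ c j) :
    ∑ j, c j ^ p ≤ (Fintype.card ι : ℝ) ^ (1 - p) * (∑ j, c j) ^ p := by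
  rcases isEmpty_or_nonempty ι with hι | hι
  · simp only [Finset.univ_eq_empty, Finset.sum_empty, Fintype.card_eq_zero, Nat.cast_zero]
    positivity
  set n : ℝ := (Fintype.card ι : ℝ)
  have hn : 0 < n := Nat.cast_pos.2 Fintype.card_pos
  have h := (Real.concaveOn_rpow hp₀ hp₁).le_map_sum (t := Finset.univ)
    (w := fun _ ↦ n⁻¹) (p := c) (fun _ _ ↦ by positivity)
    (by simp [Finset.card_univ, n, hn.ne']) (fun j _ ↦ hc j)
  simp only [smul_eq_mul, ← Finset.mul_sum, Real.mul_rpow (inv_nonneg.2 hn.le)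
    (Finset.sum_nonneg fun j _ ↦ hc j), Real.inv_rpow hn.le] at h
  rw [Real.rpow_sub hn, Real.rpow_one]
  rw [inv_mul_le_iff₀ hn] at h
  calc ∑ j, c j ^ p ≤ n * ((n ^ p)⁻¹ * (∑ j, c j) ^ p) := h
    _ = n / n ^ p * (∑ j, c j) ^ p := by ring

theorem mul_rpow_mul_two_mul_rpow_le {n k q β : ℝ} (hk : 0 < k) (hq₀ : 0 ≤ q)
    (hβk : β * n ^ q ≤ 2 * q * k ^ (1 + q)) :
    β * (n ^ q * (2 * k) ^ (1 - q)) ≤ 4 * q * k ^ 2 := by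
  have h2 : (2 : ℝ) ^ (1 - q) ≤ 2 := by
    simpa using Real.rpow_le_rpow_of_exponent_le one_le_two (by linarith : 1 - q ≤ 1)
  calc β * (n ^ q * (2 * k) ^ (1 - q)) = β * n ^ q * (2 : ℝ) ^ (1 - q) * k ^ (1 - q) := by
        rw [Real.mul_rpow zero_le_two hk.le]; ring
    _ ≤ 2 * q * k ^ (1 + q) * 2 * k ^ (1 - q) := by gcongr
    _ = 4 * q * (k ^ (1 + q) * k ^ (1 - q)) := by ring
    _ = 4 * q * k ^ 2 := by
        rw [← Real.rpow_add hk, add_add_sub_cancel, one_add_one_eq_two, Real.rpow_two]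

theorem Pi.exists_norm_eq_abs {ι : Type*} [Fintype ι] [Nonempty ι] (x : ι → ℝ) :
    ∃ j, ‖x‖ = |x j| := by
  obtain ⟨j, -, hj⟩ := Finset.exists_mem_eq_sup Finset.univ Finset.univ_nonempty (‖x ·‖₊)
  exact ⟨j, by rw [Pi.norm_def x, hj, coe_nnnorm, Real.norm_eq_abs]⟩

section

variable {ι : Type*} [Fintype ι] {k q β : ℝ}

theorem strongConvexOn_sum_rpow_one_add (hq₀ : 0 ≤ q) (hq₁ : q ≤ 1) :
    StrongConvexOn (Set.univ.pi fun _ : ι ↦ Set.Icc (0 : ℝ) 1) (q * (1 + q))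
      fun x : ι → ℝ ↦ ∑ j, x j ^ (1 + q) := by
  refine strongConvexOn_of_mul_sq_le_jensenGap (convex_pi fun _ _ ↦ convex_Icc 0 1)
    fun x hx y hy t ht₀ ht₁ ↦ ?_
  have hgap (j : ι) : t * (1 - t) * (q * (1 + q) / 2 * (x j - y j) ^ 2) ≤
      jensenGap (fun s : ℝ ↦ s ^ (1 + q)) t (x j) (y j) := by
    simpa [Real.norm_eq_abs, sq_abs] using
      (strongConvexOn_rpow_one_add hq₀ hq₁ (c := 1)).mul_sq_le_jensenGap (hx j trivial)
        (hy j trivial) ht₀ ht₁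
  rw [jensenGap_sum (· ^ (1 + q))]
  rcases isEmpty_or_nonempty ι with hι | hι
  · simp [Subsingleton.elim (x - y) 0]
  obtain ⟨j, hj⟩ := Pi.exists_norm_eq_abs (x - y)
  calc _ = t * (1 - t) * (q * (1 + q) / 2 * (x j - y j) ^ 2) := by
        rw [hj, Pi.sub_apply, sq_abs]
    _ ≤ _ := hgap j
    _ ≤ _ := Finset.single_le_sum (fun i _ ↦ le_trans (mul_nonneg (mul_nonneg ht₀
        (sub_nonneg.2 ht₁)) (by positivity)) (hgap i)) (Finset.mem_univ j)

theorem mul_sq_sum_abs_sub_le_jensenGap (hq₀ : 0 ≤ q) (hq₁ : q ≤ 1) {x y : ι → ℝ}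
    (hx : ∀ j, 0 ≤ x j) (hy : ∀ j, 0 ≤ y j) {t : ℝ} (ht₀ : 0 ≤ t) (ht₁ : t ≤ 1) :
    t * (1 - t) * (q * (1 + q) / 2 * (∑ j, |x j - y j|) ^ 2) ≤
      (Fintype.card ι : ℝ) ^ q * (∑ j, (x j + y j)) ^ (1 - q) *
        jensenGap (fun z : ι → ℝ ↦ ∑ j, z j ^ (1 + q)) t x y := by
  set s : ι → ℝ := fun j ↦ x j + y j
  have hs (j : ι) : 0 ≤ s j := add_nonneg (hx j) (hy j)
  have hs₀ (j : ι) (h : 0 = s j) : x j = 0 ∧ y j = 0 := by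
    constructor <;> linarith [hx j, hy j, (show s j = x j + y j from rfl)]
  set T := ∑ j, s j ^ (q - 1) * (x j - y j) ^ 2
  have hT₀ : 0 ≤ T :=
    Finset.sum_nonneg fun j _ ↦ mul_nonneg (Real.rpow_nonneg (hs j) _) (sq_nonneg _)
  have hgap (j : ι) : t * (1 - t) * (q * (1 + q) / 2 * (s j ^ (q - 1) * (x j - y j) ^ 2)) ≤
      jensenGap (fun s : ℝ ↦ s ^ (1 + q)) t (x j) (y j) := by
    rcases (hs j).eq_or_lt with h | h
    · simp [jensenGap, hs₀ j h, Real.zero_rpow (by linarith : (1 + q) ≠ 0)]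
    · have := (strongConvexOn_rpow_one_add hq₀ hq₁ (c := s j)).mul_sq_le_jensenGap
        ⟨hx j, le_add_of_nonneg_right (hy j)⟩ ⟨hy j, le_add_of_nonneg_left (hx j)⟩
        ht₀ ht₁
      rw [Real.norm_eq_abs, sq_abs] at this
      linarith
  have hT : t * (1 - t) * (q * (1 + q) / 2 * T) ≤
      jensenGap (fun z : ι → ℝ ↦ ∑ j, z j ^ (1 + q)) t x y := by
    rw [jensenGap_sum (· ^ (1 + q)), Finset.mul_sum, Finset.mul_sum]
    exact Finset.sum_le_sum fun j _ ↦ hgap j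
  have hCS : (∑ j, |x j - y j|) ^ 2 ≤ (∑ j, s j ^ (1 - q)) * T := by
    refine Finset.sum_sq_le_sum_mul_sum_of_sq_le_mul _ (fun j _ ↦ Real.rpow_nonneg (hs j) _)
      (fun j _ ↦ mul_nonneg (Real.rpow_nonneg (hs j) _) (sq_nonneg _)) fun j _ ↦ ?_
    rcases (hs j).eq_or_lt with h | h
    · simp [hs₀ j h]
    · rw [sq_abs, ← mul_assoc, ← Real.rpow_add h, sub_add_sub_cancel', sub_self,
        Real.rpow_zero, one_mul]
  set n : ℝ := (Fintype.card ι : ℝ)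
  have hJensen : ∑ j, s j ^ (1 - q) ≤ n ^ q * (∑ j, s j) ^ (1 - q) := by
    have h := sum_rpow_le_card_rpow_mul_rpow_sum (p := 1 - q) (by linarith) (by linarith) hs
    rwa [sub_sub_cancel] at h
  have ht : 0 ≤ t * (1 - t) := mul_nonneg ht₀ (sub_nonneg.2 ht₁)
  calc _ ≤ t * (1 - t) * (q * (1 + q) / 2 * ((∑ j, s j ^ (1 - q)) * T)) := by gcongr
    _ ≤ t * (1 - t) * (q * (1 + q) / 2 * (n ^ q * (∑ j, s j) ^ (1 - q) * T)) := by gcongr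
    _ = n ^ q * (∑ j, s j) ^ (1 - q) * (t * (1 - t) * (q * (1 + q) / 2 * T)) := by ring
    _ ≤ _ := by
        gcongr
        exact mul_nonneg (by positivity) (Real.rpow_nonneg (Finset.sum_nonneg fun j _ ↦ hs j) _)

theorem two_mul_norm_sq_le_jensenGap (hq₀ : 0 < q) (hq₁ : q ≤ 1) (hβ₀ : 0 < β)
    (hβq : β ≤ q)    {u v : ι → ℝ} (hu : u ∈ Set.univ.pi fun _ ↦ Set.Icc 0 1)
    (hv : v ∈ Set.univ.pi fun _ ↦ Set.Icc 0 1) {t : ℝ} (ht₀ : 0 ≤ t) (ht₁ : t ≤ 1) :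
    1 / 2 * t * (1 - t) * (2 * ‖u - v‖) ^ 2 ≤
      4 / (β * (1 + q)) * jensenGap (fun z : ι → ℝ ↦ ∑ j, z j ^ (1 + q)) t u v := by
  have h := (strongConvexOn_sum_rpow_one_add hq₀.le hq₁).mul_sq_le_jensenGap hu hv ht₀ ht₁
  have ht : 0 ≤ t * (1 - t) := mul_nonneg ht₀ (sub_nonneg.2 ht₁)
  calc 1 / 2 * t * (1 - t) * (2 * ‖u - v‖) ^ 2 = 2 * (t * (1 - t) * ‖u - v‖ ^ 2) := by ring
    _ ≤ 2 * q / β * (t * (1 - t) * ‖u - v‖ ^ 2) := by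
        gcongr
        rw [le_div_iff₀ hβ₀]; linarith
    _ = 4 / (β * (1 + q)) * (t * (1 - t) * (q * (1 + q) / 2 * ‖u - v‖ ^ 2)) := by
        field_simp
        ring
    _ ≤ _ := by gcongr

def hypersimplex (ι : Type*) [Fintype ι] (k : ℝ) : Set (ι → ℝ) :=
  {x | (∀ j, 0 ≤ x j ∧ x j ≤ 1) ∧ ∑ j, x j = k}

theorem hypersimplex_subset_pi : hypersimplex ι k ⊆ Set.univ.pi fun _ ↦ Set.Icc 0 1 :=
  fun _ hx j _ ↦ hx.1 j

theorem convex_hypersimplex : Convex ℝ (hypersimplex ι k) := by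
  rintro x ⟨hx, hxk⟩ y ⟨hy, hyk⟩ a b ha hb hab
  refine ⟨fun j ↦ ⟨?_, ?_⟩, ?_⟩ <;> simp only [Pi.add_apply, Pi.smul_apply, smul_eq_mul]
  · nlinarith [hx j, hy j]
  · nlinarith [hx j, hy j]
  · rw [Finset.sum_add_distrib, ← Finset.mul_sum, ← Finset.mul_sum, hxk, hyk]
    linear_combination k * hab

theorem exists_forall_le_sum_eq {c : ι → ℝ} (hc : ∀ j, 0 ≤ c j) {b : ℝ} (hb₀ : 0 ≤ b)
    (hb : b ≤ ∑ j, c j) :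
    ∃ w : ι → ℝ, (∀ j, 0 ≤ w j ∧ w j ≤ c j) ∧ ∑ j, w j = b := by
  have hS : 0 ≤ ∑ j, c j := hb₀.trans hb
  refine ⟨fun j ↦ b / (∑ j, c j) * c j,
    fun j ↦ ⟨mul_nonneg (div_nonneg hb₀ hS) (hc j), ?_⟩, ?_⟩
  · exact mul_le_of_le_one_left (hc j) (div_le_one_of_le₀ hb hS)
  · rw [← Finset.mul_sum]
    exact div_mul_cancel_of_imp fun h ↦ le_antisymm (h ▸ hb) hb₀

theorem mem_hypersimplex_sub (hkn : 2 * k ≤ Fintype.card ι) {e : ι → ℝ}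
    (he : ∑ j, e j = 0) (he₁ : ∀ j, |e j| ≤ 1) (hek : ∑ j, |e j| ≤ 2 * k) :
    e ∈ hypersimplex ι k - hypersimplex ι k := by
  set S := ∑ j, |e j|
  have hpos : ∑ j, (e j)⁺ = S / 2 ∧ ∑ j, (e j)⁻ = S / 2 := by
    have h₁ : ∑ j, ((e j)⁺ - (e j)⁻) = 0 := by simpa only [posPart_sub_negPart] using he
    have h₂ : ∑ j, ((e j)⁺ + (e j)⁻) = S := by simp only [posPart_add_negPart, S]
    rw [Finset.sum_sub_distrib] at h₁
    rw [Finset.sum_add_distrib] at h₂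
    constructor <;> linarith
  obtain ⟨w, hw, hwS⟩ := exists_forall_le_sum_eq (c := fun j ↦ 1 - |e j|) (b := k - S / 2)
    (fun j ↦ sub_nonneg.2 (he₁ j)) (by linarith) (by
      rw [Finset.sum_sub_distrib, Finset.sum_const, Finset.card_univ, nsmul_one]; linarith)
  have hparts (j : ι) : (e j)⁺ + (e j)⁻ = |e j| := posPart_add_negPart (e j)
  refine ⟨e⁺ + w, ⟨fun j ↦ ⟨?_, ?_⟩, ?_⟩, e⁻ + w, ⟨fun j ↦ ⟨?_, ?_⟩, ?_⟩, ?_⟩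
  all_goals simp only [Pi.add_apply, Pi.posPart_apply, Pi.negPart_apply]
  · exact add_nonneg (posPart_nonneg _) (hw j).1
  · linarith [hw j, hparts j, negPart_nonneg (e j)]
  · rw [Finset.sum_add_distrib, hpos.1, hwS]; ring
  · exact add_nonneg (negPart_nonneg _) (hw j).1
  · linarith [hw j, hparts j, posPart_nonneg (e j)]
  · rw [Finset.sum_add_distrib, hpos.2, hwS]; ring
  · rw [add_sub_add_right_eq_sub, posPart_sub_negPart]

theorem gauge_half_hypersimplex_sub_le (hk : 0 < k) (hkn : 2 * k ≤ Fintype.card ι)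
    {x : ι → ℝ} (hx : ∑ j, x j = 0) :
    gauge ((2⁻¹ : ℝ) • (hypersimplex ι k - hypersimplex ι k)) x ≤
      max (2 * ‖x‖) ((∑ j, |x j|) / k) := by
  rcases eq_or_ne x 0 with rfl | hx₀
  · simp [gauge_zero]
  set r := max (2 * ‖x‖) ((∑ j, |x j|) / k)
  have hr : 0 < r := lt_max_of_lt_left (by positivity)
  have he : (2 / r) • x ∈ hypersimplex ι k - hypersimplex ι k := by
    refine mem_hypersimplex_sub hkn ?_ (fun j ↦ ?_) ?_ <;>
      simp only [Pi.smul_apply, smul_eq_mul, abs_mul, abs_of_pos (div_pos two_pos hr)]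
    · rw [← Finset.mul_sum, hx, mul_zero]
    · rw [div_mul_eq_mul_div, div_le_one hr]
      have := norm_le_pi_norm x j
      have : 2 * ‖x‖ ≤ r := le_max_left _ _
      rw [Real.norm_eq_abs] at *
      linarith
    · rw [← Finset.mul_sum, div_mul_eq_mul_div, div_le_iff₀ hr]
      have : (∑ j, |x j|) / k ≤ r := le_max_right _ _
      rw [div_le_iff₀ hk] at this
      linarith
  refine gauge_le_of_mem hr.le ?_
  convert Set.smul_mem_smul_set (a := r) (Set.smul_mem_smul_set (a := (2⁻¹ : ℝ)) he) using 1
  rw [smul_smul, smul_smul, show r * 2⁻¹ * (2 / r) = 1 by field_simp, one_smul]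

theorem sum_abs_div_sq_le_jensenGap (hk : 0 < k) (hkn : 2 * k ≤ Fintype.card ι) (hq₀ : 0 < q)
    (hq₁ : q ≤ 1) (hβ₀ : 0 < β)
    (hβk : β * (Fintype.card ι : ℝ) ^ q ≤ 2 * q * k ^ (1 + q)) {u v : ι → ℝ}
    (hu : u ∈ hypersimplex ι k) (hv : v ∈ hypersimplex ι k) {t : ℝ}
    (ht₀ : 0 ≤ t) (ht₁ : t ≤ 1) :
    1 / 2 * t * (1 - t) * ((∑ j, |u j - v j|) / k) ^ 2 ≤
      4 / (β * (1 + q)) * jensenGap (fun z : ι → ℝ ↦ ∑ j, z j ^ (1 + q)) t u v := by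
  have h := mul_sq_sum_abs_sub_le_jensenGap hq₀.le hq₁ (fun j ↦ (hu.1 j).1)
    (fun j ↦ (hv.1 j).1) ht₀ ht₁
  rw [Finset.sum_add_distrib, hu.2, hv.2, ← two_mul] at h
  set n : ℝ := (Fintype.card ι : ℝ)
  set L := ∑ j, |u j - v j|
  set P := n ^ q * (2 * k) ^ (1 - q)
  have hP₀ : 0 < P := mul_pos (Real.rpow_pos_of_pos (by linarith) _) (by positivity)
  have hP : β * P ≤ 4 * q * k ^ 2 := mul_rpow_mul_two_mul_rpow_le hk hq₀.le hβk
  calc 1 / 2 * t * (1 - t) * (L / k) ^ 2 = t * (1 - t) * L ^ 2 / (2 * k ^ 2) := by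
        field_simp
    _ ≤ t * (1 - t) * L ^ 2 * (2 * q / (β * P)) := by
        rw [div_eq_mul_one_div]
        refine mul_le_mul_of_nonneg_left ?_ (mul_nonneg (mul_nonneg ht₀ (sub_nonneg.2 ht₁))
          (sq_nonneg L))
        rw [div_le_div_iff₀ (by positivity) (by positivity)]
        linarith
    _ = 4 / (β * (1 + q)) * (t * (1 - t) * (q * (1 + q) / 2 * L ^ 2)) / P := by
        field_simp
        ring
    _ ≤ _ := by
        rw [div_le_iff₀ hP₀]
        exact (mul_le_mul_of_nonneg_left h (by positivity)).trans_eq (by ring)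

theorem half_mul_sq_gauge_le_jensenGap (hk : 0 < k) (hkn : 2 * k ≤ Fintype.card ι)
    (hq₀ : 0 < q) (hq₁ : q ≤ 1) (hβ₀ : 0 < β) (hβq : β ≤ q)
    (hβk : β * (Fintype.card ι : ℝ) ^ q ≤ 2 * q * k ^ (1 + q))
    {u v : ι → ℝ} (hu : u ∈ hypersimplex ι k) (hv : v ∈ hypersimplex ι k) {t : ℝ}
    (ht₀ : 0 ≤ t) (ht₁ : t ≤ 1) :
    1 / 2 * t * (1 - t) *
        gauge ((2⁻¹ : ℝ) • (hypersimplex ι k - hypersimplex ι k)) (u - v) ^ 2 ≤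
      4 / (β * (1 + q)) * jensenGap (fun z : ι → ℝ ↦ ∑ j, z j ^ (1 + q)) t u v := by
  have hgauge := gauge_half_hypersimplex_sub_le hk hkn (x := u - v)
    (by simp only [Pi.sub_apply, Finset.sum_sub_distrib, hu.2, hv.2, sub_self])
  simp only [Pi.sub_apply] at hgauge
  have ht : 0 ≤ 1 / 2 * t * (1 - t) := mul_nonneg (by positivity) (sub_nonneg.2 ht₁)
  rcases le_max_iff.1 hgauge with h | h <;>
    refine (mul_le_mul_of_nonneg_left (pow_le_pow_left₀ (gauge_nonneg _) h 2) ht).trans ?_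
  · exact two_mul_norm_sq_le_jensenGap hq₀ hq₁ hβ₀ hβq (hypersimplex_subset_pi hu)
      (hypersimplex_subset_pi hv) ht₀ ht₁
  · exact sum_abs_div_sq_le_jensenGap hk hkn hq₀ hq₁ hβ₀ hβk hu hv ht₀ ht₁

end

namespace Hypersimplex

noncomputable def exponent (m k : ℕ) : ℝ :=
  if 1 < k then min 1 (Real.log k / Real.log ((m : ℝ) / k)) else 1 / (2 * Real.log m)

noncomputable def modulus (m k : ℕ) : ℝ :=
  if Real.sqrt m ≤ (k : ℝ) then 1
  else if 1 < k then exponent m k / 2 else exponent m k / (2 * Real.sqrt (Real.exp 1))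

variable {m k : ℕ}

theorem one_lt_div_of_two_mul_le (hk : 0 < k) (hkm : 2 * k ≤ m) : 1 < (m : ℝ) / k := by
  have hk' : (0 : ℝ) < k := Nat.cast_pos.2 hk
  rw [one_lt_div hk']
  exact_mod_cast (by omega : k < m)

theorem exponent_pos (hm : 2 ≤ m) (hkm : 2 * k ≤ m) : 0 < exponent m k := by
  unfold exponent
  split_ifs with hk
  · exact lt_min one_pos (div_pos (Real.log_pos (by exact_mod_cast hk))
      (Real.log_pos (one_lt_div_of_two_mul_le (by omega) hkm)))
  · have := Real.log_pos (by exact_mod_cast (by omega : 1 < m) : (1 : ℝ) < m)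
    positivity

theorem exponent_le_one (hm : 2 ≤ m) : exponent m k ≤ 1 := by
  unfold exponent
  split_ifs
  · exact min_le_left _ _
  · have : Real.log 2 ≤ Real.log m := Real.log_le_log two_pos (by exact_mod_cast hm)
    have := Real.log_two_gt_d9
    rw [div_le_one (by linarith)]
    linarith

theorem exponent_eq_one (hm : 2 ≤ m) (hkm : 2 * k ≤ m) (h : Real.sqrt m ≤ k) :
    exponent m k = 1 := by
  have hmk : (m : ℝ) ≤ k ^ 2 := (Real.sqrt_le_left (Nat.cast_nonneg k)).1 h
  have hk : 1 < k := by
    by_contra hk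
    have : (k : ℝ) ≤ 1 := by exact_mod_cast not_lt.1 hk
    have : (2 : ℝ) ≤ m := by exact_mod_cast hm
    nlinarith
  have hk' : (0 : ℝ) < k := by positivity
  rw [exponent, if_pos hk, min_eq_left]
  rw [one_le_div (Real.log_pos (one_lt_div_of_two_mul_le (by omega) hkm))]
  refine Real.log_le_log (by positivity) ?_
  rw [div_le_iff₀ hk']
  nlinarith

theorem rpow_exponent_of_lt_sqrt (hkm : 2 * k ≤ m) (hk : 1 < k) (h : (k : ℝ) < Real.sqrt m) :
    (m : ℝ) ^ exponent m k = k ^ (1 + exponent m k) := by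
  have hk' : (0 : ℝ) < k := by positivity
  have hmk : 1 < (m : ℝ) / k := one_lt_div_of_two_mul_le (by omega) hkm
  have hq : exponent m k = Real.logb ((m : ℝ) / k) k := by
    rw [exponent, if_pos hk, min_eq_right]
    · rfl
    rw [div_le_one (Real.log_pos hmk)]
    refine Real.log_le_log hk' ?_
    rw [le_div_iff₀ hk']
    nlinarith [(Real.lt_sqrt hk'.le).1 h]
  calc (m : ℝ) ^ exponent m k = ((m : ℝ) / k) ^ exponent m k * k ^ exponent m k := by
        rw [← Real.mul_rpow (by positivity) hk'.le, div_mul_cancel₀ _ hk'.ne']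
    _ = k ^ (1 + exponent m k) := by
        rw [Real.rpow_add hk', Real.rpow_one, hq, Real.rpow_logb (by positivity) hmk.ne' hk']

theorem rpow_exponent_one (hm : 2 ≤ m) : (m : ℝ) ^ exponent m 1 = Real.sqrt (Real.exp 1) := by
  have hm' : (1 : ℝ) < m := by exact_mod_cast (by omega : 1 < m)
  rw [exponent, if_neg (lt_irrefl 1), Real.sqrt_eq_rpow, Real.exp_one_rpow,
    Real.rpow_def_of_pos (by positivity)]
  congr 1
  field_simp [(Real.log_pos hm').ne']

theorem modulus_pos (hm : 2 ≤ m) (hkm : 2 * k ≤ m) : 0 < modulus m k := by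
  have := exponent_pos hm hkm
  unfold modulus
  split_ifs <;> positivity

theorem modulus_le_exponent (hm : 2 ≤ m) (hkm : 2 * k ≤ m) : modulus m k ≤ exponent m k := by
  have hq := exponent_pos hm hkm
  unfold modulus
  split_ifs with h
  · exact (exponent_eq_one hm hkm h).ge
  · linarith
  · have : 1 ≤ Real.sqrt (Real.exp 1) :=
      Real.one_le_sqrt.2 (Real.one_le_exp zero_le_one)
    rw [div_le_iff₀ (by positivity)]
    nlinarith

theorem modulus_mul_rpow_exponent_le (hm : 2 ≤ m) (hk : 1 ≤ k) (hkm : 2 * k ≤ m) :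
    modulus m k * (m : ℝ) ^ exponent m k ≤
      2 * exponent m k * (k : ℝ) ^ (1 + exponent m k) := by
  have hq := exponent_pos hm hkm
  unfold modulus
  split_ifs with h₁ h₂
  · have hmk : (m : ℝ) ≤ k ^ 2 := (Real.sqrt_le_left (Nat.cast_nonneg k)).1 h₁
    rw [exponent_eq_one hm hkm h₁, Real.rpow_one, one_add_one_eq_two, Real.rpow_two]
    linarith
  · rw [rpow_exponent_of_lt_sqrt hkm h₂ (not_le.1 h₁)]
    have : 0 ≤ (k : ℝ) ^ (1 + exponent m k) := by positivity
    nlinarith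
  · obtain rfl : k = 1 := by omega
    have := Real.sqrt_pos.2 (Real.exp_pos 1)
    rw [rpow_exponent_one hm, Nat.cast_one, Real.one_rpow, div_mul_eq_mul_div,
      div_le_iff₀ (by positivity)]
    nlinarith [mul_pos hq this]

end Hypersimplex

/-- For `m ≥ 2`, `1 ≤ k ≤ m/2`, with `q`, `β` as specified,
`X = {x ∈ ℝ^m : 0 ≤ x_j ≤ 1, Σ_j x_j = k}` and `ω(x) = (4/(β(1+q)))·Σ_j x_j^{1+q}`,
the function `ω` is continuous and convex on `X` and strongly convex with modulus 1 on `X`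
w.r.t. the norm whose unit ball is `½[X−X]` (its gauge). -/
theorem stmt_12 (m k : ℕ) (hm : 2 ≤ m) (hk1 : 1 ≤ k) (hk2 : 2 * k ≤ m)
    (q β : ℝ)
    (hq : q = if 1 < k then min 1 (Real.log k / Real.log ((m : ℝ) / k)) else 1 / (2 * Real.log m))
    (hβ : β = if Real.sqrt m ≤ (k : ℝ) then 1
      else if 1 < k then q / 2 else q / (2 * Real.sqrt (Real.exp 1)))
    (X : Set (Fin m → ℝ))
    (hX : X = {x | (∀ j, 0 ≤ x j ∧ x j ≤ 1) ∧ ∑ j, x j = (k : ℝ)})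
    (ω : (Fin m → ℝ) → ℝ)
    (hω : ω = fun x => (4 / (β * (1 + q))) * ∑ j, x j ^ (1 + q))
    (Nrm : (Fin m → ℝ) → ℝ)
    (hNrm : Nrm = gauge ((2⁻¹ : ℝ) • (X - X))) :
    ContinuousOn ω X ∧ ConvexOn ℝ X ω ∧
    ∀ u ∈ X, ∀ v ∈ X, ∀ t ∈ Set.Icc (0 : ℝ) 1,
      ω (t • u + (1 - t) • v) ≤
        t * ω u + (1 - t) * ω v - (1 / 2) * t * (1 - t) * Nrm (u - v) ^ 2 := by
  have hqe : q = Hypersimplex.exponent m k := hq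
  have hβe : β = Hypersimplex.modulus m k := by rw [hβ, hqe]; rfl
  have hq₀ : 0 < q := hqe ▸ Hypersimplex.exponent_pos hm hk2
  have hq₁ : q ≤ 1 := hqe ▸ Hypersimplex.exponent_le_one hm
  have hβ₀ : 0 < β := hβe ▸ Hypersimplex.modulus_pos hm hk2
  have hβq : β ≤ q := hβe ▸ hqe ▸ Hypersimplex.modulus_le_exponent hm hk2
  have hβk : β * (Fintype.card (Fin m) : ℝ) ^ q ≤ 2 * q * (k : ℝ) ^ (1 + q) := by
    rw [Fintype.card_fin, hβe, hqe]
    exact Hypersimplex.modulus_mul_rpow_exponent_le hm hk1 hk2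
  have hkn : 2 * (k : ℝ) ≤ Fintype.card (Fin m) := by
    rw [Fintype.card_fin]; exact_mod_cast hk2
  obtain rfl : X = hypersimplex (Fin m) k := hX
  subst hω hNrm
  refine ⟨?_, ?_, fun u hu v hv t ht ↦ ?_⟩
  · have := Real.continuous_rpow_const (q := 1 + q) (by linarith)
    fun_prop
  · have hφ : 0 ≤ fun r : ℝ ↦ q * (1 + q) / 2 * r ^ 2 := fun r ↦ by positivity
    exact (((strongConvexOn_sum_rpow_one_add hq₀.le hq₁).convexOn hφ).subset
      hypersimplex_subset_pi convex_hypersimplex).smul (by positivity)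
  · have h := half_mul_sq_gauge_le_jensenGap (Nat.cast_pos.2 hk1) hkn hq₀ hq₁ hβ₀ hβq hβk hu hv
      ht.1 ht.2
    simp only [jensenGap] at h ⊢
    linear_combination h
end

section
/- For every integer k ≥ 1 there exists a constant C > 0 depending only on k with the following property. Let E be a finite-dimensional real inner product space, W ⊆ E a convex compact set with 0 ∈ W, and Q a symmetric k-linear form on E such that |Q(w, …, w)| ≤ M for all w ∈ W, where M ≥ 0. Then for every z in the linear span of W, |Q(z, …, z)| ≤ C·M·‖z‖_W^k, where ‖·‖_W is the gauge (Minkowski functional) of ½[W−W] := {(u−v)/2 : u, v ∈ W} on the span of W. -/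
/-!
Polarization writes `n! Q(x₁, …, xₙ)` as the alternating sum of the `Q(∑_{i ∈ S} xᵢ, …)` over
`S ⊆ {1, …, n}`. For `xᵢ ∈ W` each `∑_{i ∈ S} xᵢ` lies in `n • W` because `W` is convex and
contains `0`, so `|Q| ≤ (2n)ⁿ M` on `Wⁿ`. A point `(u - v)/2` of `½[W−W]` is `u/2 + (-v/2)` with
`u/2, v/2 ∈ W`; expanding multilinearly gives `2ⁿ` terms, each `±Q` of a point of `Wⁿ`. By
homogeneity the resulting bound `(4n)ⁿ M` on `½[W−W]` becomes `(4n)ⁿ M rⁿ` on `r • ½[W−W]`, and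
the infimum of such `r` is the gauge; it is taken over a nonempty set because the convex balanced
set `½[W−W]` absorbs every point of `span W`.
-/

open Finset Pointwise Filter Topology

theorem Finset.sum_ite_subset_neg_one_pow_card {ι : Type*} [Fintype ι] [DecidableEq ι]
    (T : Finset ι) :
    ∑ S : Finset ι, (if T ⊆ S then (-1 : ℝ) ^ #S else 0) =
      if T = univ then (-1 : ℝ) ^ Fintype.card ι else 0 := by
  have h := prod_add (fun _ => (-1 : ℝ)) (fun i => if i ∉ T then 1 else 0) univ
  simp only [prod_const, prod_boole, mem_sdiff, mem_univ, true_and] at h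
  rw [← powerset_univ]
  convert h.symm using 1
  · exact sum_congr rfl fun S _ => by simp [subset_iff, not_imp_not]
  · by_cases hT : T = univ
    · simp [hT]
    · obtain ⟨i, hi⟩ : ∃ i, i ∉ T := by simpa [eq_univ_iff_forall] using hT
      rw [if_neg hT, prod_eq_zero (mem_univ i) (by simp [hi])]

theorem Fintype.sum_ite_bijective {ι M : Type*} [Fintype ι] [DecidableEq ι] [AddCommMonoid M]
    (f : (ι → ι) → M) :
    ∑ r : ι → ι, (if Function.Bijective r then f r else 0) = ∑ σ : Equiv.Perm ι, f σ := by
  rw [← sum_filter, sum_subtype _ (p := Function.Bijective) (fun r => mem_filter_univ r) f]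
  exact Fintype.sum_equiv Equiv.bijectiveEquiv _ _ fun _ => rfl

theorem MultilinearMap.map_const_smul {ι E : Type*} [Fintype ι] [AddCommGroup E] [Module ℝ E]
    (Q : MultilinearMap ℝ (fun _ : ι => E) ℝ) (c : ℝ) (y : E) :
    Q (fun _ => c • y) = c ^ Fintype.card ι * Q (fun _ => y) := by
  simpa using Q.map_smul_univ (fun _ => c) (fun _ => y)

section Polarization

variable {ι E : Type*} [Fintype ι] [DecidableEq ι] [AddCommGroup E] [Module ℝ E]
  (Q : MultilinearMap ℝ (fun _ : ι => E) ℝ)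

theorem MultilinearMap.polarization (x : ι → E) :
    ∑ S : Finset ι, (-1 : ℝ) ^ #S * Q (fun _ => ∑ i ∈ S, x i) =
      (-1 : ℝ) ^ Fintype.card ι * ∑ σ : Equiv.Perm ι, Q (x ∘ σ) := by
  have expand (S : Finset ι) : Q (fun _ => ∑ i ∈ S, x i) =
      ∑ r : ι → ι, (if univ.image r ⊆ S then 1 else 0) * Q (x ∘ r) := by
    rw [Q.map_sum_finset]
    simp_rw [boole_mul, ← sum_filter]
    congr 1
    ext r
    simp [image_subset_iff]
  have image_eq_univ (r : ι → ι) : univ.image r = univ ↔ Function.Bijective r := by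
    rw [← Finite.surjective_iff_bijective]
    simp [eq_univ_iff_forall, Function.Surjective]
  simp_rw [expand, mul_sum, ← mul_assoc, mul_boole]
  rw [sum_comm]
  simp_rw [← sum_mul, sum_ite_subset_neg_one_pow_card, image_eq_univ, ite_mul, zero_mul,
    Fintype.sum_ite_bijective (fun r => (-1 : ℝ) ^ Fintype.card ι * Q (x ∘ r))]

theorem MultilinearMap.polarization_of_symm
    (hQ : ∀ (z : ι → E) (σ : Equiv.Perm ι), Q (z ∘ σ) = Q z) (x : ι → E) :
    ∑ S : Finset ι, (-1 : ℝ) ^ #S * Q (fun _ => ∑ i ∈ S, x i) =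
      (-1 : ℝ) ^ Fintype.card ι * ((Fintype.card ι).factorial * Q x) := by
  simp [Q.polarization, hQ, Fintype.card_perm]

end Polarization

theorem Convex.sum_mem_card_smul {ι E : Type*} [AddCommGroup E] [Module ℝ E] {W : Set E}
    (hW : Convex ℝ W) (h0 : (0 : E) ∈ W) (S : Finset ι) {x : ι → E}
    (hx : ∀ i ∈ S, x i ∈ W) : ∑ i ∈ S, x i ∈ (#S : ℝ) • W := by
  classical
  induction S using Finset.induction_on with
  | empty => simp [Set.zero_smul_set ⟨0, h0⟩]
  | insert a S ha ih =>
    rw [sum_insert ha, card_insert_of_notMem ha, Nat.cast_succ, add_comm (#S : ℝ),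
      hW.add_smul zero_le_one (Nat.cast_nonneg _), one_smul]
    exact Set.add_mem_add (hx a (mem_insert_self a S))
      (ih fun i hi => hx i (mem_insert_of_mem hi))

section Bounds

variable {ι E : Type*} [Fintype ι] [AddCommGroup E] [Module ℝ E]
  (Q : MultilinearMap ℝ (fun _ : ι => E) ℝ) {W : Set E}

theorem MultilinearMap.abs_map_le_of_mem_or_neg_mem {B : ℝ}
    (hB : ∀ x : ι → E, (∀ i, x i ∈ W) → |Q x| ≤ B) (x : ι → E)
    (hx : ∀ i, x i ∈ W ∨ -x i ∈ W) : |Q x| ≤ B := by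
  classical
  set ε : ι → ℝ := fun i => if x i ∈ W then 1 else -1
  have hεx (i : ι) : ε i • x i ∈ W := by
    by_cases h : x i ∈ W
    · simp [ε, h]
    · simpa [ε, h] using (hx i).resolve_left h
  have hx_eq : x = fun i => ε i • ε i • x i := by
    ext i
    by_cases h : x i ∈ W <;> simp [ε, h]
  have hprod : |∏ i, ε i| = 1 := by
    rw [abs_prod]
    exact prod_eq_one fun i _ => by by_cases h : x i ∈ W <;> simp [ε, h]
  rw [hx_eq, Q.map_smul_univ, smul_eq_mul, abs_mul, hprod, one_mul]
  exact hB _ hεx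

variable [DecidableEq ι]

theorem MultilinearMap.abs_map_le_of_forall_mem_convex
    (hQ : ∀ (z : ι → E) (σ : Equiv.Perm ι), Q (z ∘ σ) = Q z) (hW : Convex ℝ W)
    (h0 : (0 : E) ∈ W) {M : ℝ} (hM : ∀ w ∈ W, |Q (fun _ => w)| ≤ M) (x : ι → E)
    (hx : ∀ i, x i ∈ W) :
    |Q x| ≤ 2 ^ Fintype.card ι * Fintype.card ι ^ Fintype.card ι * M := by
  set n := Fintype.card ι
  have hdiag (S : Finset ι) : |Q (fun _ => ∑ i ∈ S, x i)| ≤ n ^ n * M := by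
    obtain ⟨w, hw, hsum⟩ := hW.sum_mem_card_smul h0 S fun i _ => hx i
    rw [← hsum, Q.map_const_smul, abs_mul, abs_pow, Nat.abs_cast]
    exact mul_le_mul (pow_le_pow_left₀ (Nat.cast_nonneg _) (mod_cast card_le_univ S) n)
      (hM w hw) (abs_nonneg _) (by positivity)
  have hfact : (1 : ℝ) ≤ n.factorial := mod_cast n.factorial_pos
  calc |Q x| ≤ n.factorial * |Q x| := le_mul_of_one_le_left (abs_nonneg _) hfact
    _ = |∑ S : Finset ι, (-1 : ℝ) ^ #S * Q (fun _ => ∑ i ∈ S, x i)| := by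
      simp [Q.polarization_of_symm hQ, abs_mul, n]
    _ ≤ ∑ S : Finset ι, |(-1 : ℝ) ^ #S * Q (fun _ => ∑ i ∈ S, x i)| := abs_sum_le_sum_abs _ _
    _ ≤ ∑ _S : Finset ι, (n : ℝ) ^ n * M :=
      sum_le_sum fun S _ => by simpa [abs_mul] using hdiag S
    _ = 2 ^ n * n ^ n * M := by simp [Fintype.card_finset, n, mul_assoc]

theorem MultilinearMap.abs_map_diag_le_of_mem_half_sub
    (hQ : ∀ (z : ι → E) (σ : Equiv.Perm ι), Q (z ∘ σ) = Q z) (hW : Convex ℝ W)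
    (h0 : (0 : E) ∈ W) {M : ℝ} (hM : ∀ w ∈ W, |Q (fun _ => w)| ≤ M) {y : E}
    (hy : y ∈ (2⁻¹ : ℝ) • (W - W)) :
    |Q (fun _ => y)| ≤ 4 ^ Fintype.card ι * Fintype.card ι ^ Fintype.card ι * M := by
  set n := Fintype.card ι
  obtain ⟨_, ⟨u, hu, v, hv, rfl⟩, rfl⟩ := hy
  have half_mem {w : E} (hw : w ∈ W) : (2⁻¹ : ℝ) • w ∈ W :=
    hW.smul_mem_of_zero_mem h0 hw ⟨by norm_num, by norm_num⟩
  set a : ι → E := fun _ => (2⁻¹ : ℝ) • u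
  set b : ι → E := fun _ => -((2⁻¹ : ℝ) • v)
  have hsplit : (fun _ => (2⁻¹ : ℝ) • (u - v)) = a + b := by
    ext; simp [a, b, sub_eq_add_neg]
  have hterm (s : Finset ι) : |Q (s.piecewise a b)| ≤ 2 ^ n * n ^ n * M := by
    refine Q.abs_map_le_of_mem_or_neg_mem (Q.abs_map_le_of_forall_mem_convex hQ hW h0 hM) _
      fun i => ?_
    by_cases hi : i ∈ s
    · simpa [a, hi] using Or.inl (half_mem hu)
    · simpa [b, hi] using Or.inr (half_mem hv)
  calc |Q (fun _ => (2⁻¹ : ℝ) • (u - v))| = |∑ s : Finset ι, Q (s.piecewise a b)| := by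
        rw [hsplit, Q.map_add_univ]
    _ ≤ ∑ s : Finset ι, |Q (s.piecewise a b)| := abs_sum_le_sum_abs _ _
    _ ≤ ∑ _s : Finset ι, 2 ^ n * n ^ n * M := sum_le_sum fun s _ => hterm s
    _ = 4 ^ n * n ^ n * M := by
      rw [sum_const, card_univ, Fintype.card_finset, nsmul_eq_mul]
      push_cast
      rw [show (4 : ℝ) = 2 * 2 by norm_num, mul_pow]
      ring

end Bounds

theorem Balanced.exists_pos_mem_smul_of_mem_span {E : Type*} [AddCommGroup E] [Module ℝ E]
    {s : Set E} (hb : Balanced ℝ s) (hc : Convex ℝ s) (h0 : (0 : E) ∈ s) {z : E}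
    (hz : z ∈ Submodule.span ℝ s) : ∃ r : ℝ, 0 < r ∧ z ∈ r • s := by
  induction hz using Submodule.span_induction with
  | mem x hx => exact ⟨1, one_pos, by rwa [one_smul]⟩
  | zero => exact ⟨1, one_pos, by rwa [one_smul]⟩
  | add x y _ _ hx hy =>
    obtain ⟨r₁, hr₁, hx⟩ := hx
    obtain ⟨r₂, hr₂, hy⟩ := hy
    exact ⟨r₁ + r₂, by positivity, hc.add_smul hr₁.le hr₂.le ▸ Set.add_mem_add hx hy⟩
  | smul a x _ hx =>
    obtain ⟨r, hr, hx⟩ := hx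
    refine ⟨|a| * r + 1, by positivity, hb.smul_mono (a := a * r) ?_ ?_⟩
    · have hpos : 0 < |a| * r + 1 := by positivity
      rw [Real.norm_eq_abs, Real.norm_eq_abs, abs_mul, abs_of_pos hr, abs_of_pos hpos]
      linarith
    · rw [← smul_smul]; exact Set.smul_mem_smul_set hx

theorem Convex.exists_pos_mem_smul_half_sub_of_mem_span {E : Type*} [AddCommGroup E]
    [Module ℝ E] {W : Set E} (hW : Convex ℝ W) (h0 : (0 : E) ∈ W) {z : E}
    (hz : z ∈ Submodule.span ℝ W) : ∃ r : ℝ, 0 < r ∧ z ∈ r • ((2⁻¹ : ℝ) • (W - W)) := by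
  have hconv : Convex ℝ ((2⁻¹ : ℝ) • (W - W)) := (hW.sub hW).smul _
  have hbal : Balanced ℝ ((2⁻¹ : ℝ) • (W - W)) := by
    rw [balanced_iff_neg_mem hconv]
    rintro _ ⟨_, ⟨u, hu, v, hv, rfl⟩, rfl⟩
    rw [← smul_neg, neg_sub]
    exact Set.smul_mem_smul_set (Set.sub_mem_sub hv hu)
  have hmem {w : E} (hw : w ∈ W) : (2⁻¹ : ℝ) • w ∈ (2⁻¹ : ℝ) • (W - W) :=
    Set.smul_mem_smul_set (by simpa using Set.sub_mem_sub hw h0)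
  refine hbal.exists_pos_mem_smul_of_mem_span hconv (by simpa using hmem h0) ?_
  refine Submodule.span_le.2 (fun w hw => ?_) hz
  simpa [smul_smul] using Submodule.smul_mem _ (2 : ℝ) (Submodule.subset_span (hmem hw))

theorem le_mul_gauge_pow {E : Type*} [AddCommGroup E] [Module ℝ E] {s : Set E} {x : E}
    {a c : ℝ} (k : ℕ) (hc : 0 ≤ c) (hx : ∃ r : ℝ, 0 < r ∧ x ∈ r • s)
    (h : ∀ r : ℝ, 0 < r → x ∈ r • s → a ≤ c * r ^ k) : a ≤ c * gauge s x ^ k := by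
  have above (t : ℝ) (ht : gauge s x < t) : a ≤ c * t ^ k := by
    obtain ⟨r, ⟨hr, hxr⟩, hrt⟩ := exists_lt_of_csInf_lt hx (by rwa [gauge] at ht)
    exact (h r hr hxr).trans (by gcongr)
  have hlim : Tendsto (fun t => c * t ^ k) (𝓝[>] gauge s x) (𝓝 (c * gauge s x ^ k)) :=
    ((continuous_const.mul (continuous_pow k)).tendsto _).mono_left nhdsWithin_le_nhds
  exact ge_of_tendsto hlim (eventually_nhdsWithin_of_forall above)

theorem stmt_14_general (k : ℕ) :
    ∃ C : ℝ, 0 < C ∧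
      ∀ (E : Type) (_ : NormedAddCommGroup E) (_ : InnerProductSpace ℝ E)
        (_ : FiniteDimensional ℝ E)
        (W : Set E), W.Nonempty → Convex ℝ W → IsCompact W → (0 : E) ∈ W →
        ∀ (Q : MultilinearMap ℝ (fun _ : Fin k => E) ℝ),
          (∀ (z : Fin k → E) (e : Equiv.Perm (Fin k)), Q (z ∘ e) = Q z) →
          ∀ M : ℝ, 0 ≤ M →
          (∀ w ∈ W, |Q (fun _ => w)| ≤ M) →
          ∀ z ∈ Submodule.span ℝ W,
            |Q (fun _ => z)| ≤ C * M * gauge ((2⁻¹ : ℝ) • (W - W)) z ^ k := by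
  refine ⟨4 ^ k * k ^ k, mul_pos (by positivity) (mod_cast Nat.pow_self_pos), ?_⟩
  intro E _ _ _ W _ hW _ h0 Q hQ M hM hMQ z hz
  refine le_mul_gauge_pow k (by positivity) (hW.exists_pos_mem_smul_half_sub_of_mem_span h0 hz) ?_
  rintro r hr ⟨y, hy, rfl⟩
  have hy := Q.abs_map_diag_le_of_mem_half_sub hQ hW h0 hMQ hy
  rw [Fintype.card_fin] at hy
  rw [Q.map_const_smul, Fintype.card_fin, abs_mul, abs_pow, abs_of_pos hr, mul_comm]
  gcongr

/-- For every integer `k ≥ 1` there is a constant `C > 0` depending only on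
`k` such that: for every finite-dimensional real inner product space `E`, every convex compact
`W ⊆ E` with `0 ∈ W`, and every symmetric `k`-linear form `Q` on `E` with `|Q(w,…,w)| ≤ M` for
all `w ∈ W`, one has `|Q(z,…,z)| ≤ C·M·‖z‖_W^k` for every `z ∈ span(W)`, where `‖·‖_W` is the
gauge of `½[W−W]`. -/
theorem stmt_14 (k : ℕ) (hk : 1 ≤ k) :
    ∃ C : ℝ, 0 < C ∧
      ∀ (E : Type) (_ : NormedAddCommGroup E) (_ : InnerProductSpace ℝ E)
        (_ : FiniteDimensional ℝ E)
        (W : Set E), W.Nonempty → Convex ℝ W → IsCompact W → (0 : E) ∈ W →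
        ∀ (Q : MultilinearMap ℝ (fun _ : Fin k => E) ℝ),
          (∀ (z : Fin k → E) (e : Equiv.Perm (Fin k)), Q (z ∘ e) = Q z) →
          ∀ M : ℝ, 0 ≤ M →
          (∀ w ∈ W, |Q (fun _ => w)| ≤ M) →
          ∀ z ∈ Submodule.span ℝ W,
            |Q (fun _ => z)| ≤ C * M * gauge ((2⁻¹ : ℝ) • (W - W)) z ^ k :=
  stmt_14_general k
end

section
/- Let q ∈ (0, 1] and let a, b be nonzero real numbers with |a| ≥ |b| and a ≠ b. Then (sgn(a)·|a|^q − sgn(b)·|b|^q)/(a − b) ≥ q·|a|^{q−1}. -/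
/-!
Write `f(s) = sgn(s)|s|^q`. Since `f` is odd, the divided difference is unchanged under
`(a, b) ↦ (-a, -b)`, so we may take `a > 0`. If `b > 0`, the claim says that a secant of the
concave function `s ↦ s^q` ending at `a` is at least as steep as the tangent at `a`. If `b ≤ 0`,
put `x = -b ∈ [0, a]`; then `x^q = x · x^{q-1} ≥ x · a^{q-1}`, and together with `a^q = a · a^{q-1}`
this gives `a^q + x^q ≥ a^{q-1}(a + x) ≥ q a^{q-1}(a + x)`.
-/

open Real

namespace Real

lemma mul_rpow_sub_one_le_rpow {q x a : ℝ} (hq : q ≤ 1) (hx : 0 ≤ x) (hxa : x ≤ a) :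
    x * a ^ (q - 1) ≤ x ^ q := by
  rcases hx.eq_or_lt with rfl | hx
  · simpa using rpow_nonneg le_rfl q
  calc x * a ^ (q - 1) ≤ x * x ^ (q - 1) :=
        mul_le_mul_of_nonneg_left (rpow_le_rpow_of_nonpos hx hxa (by linarith)) hx.le
    _ = x ^ q := by rw [mul_comm, ← rpow_add_one hx.ne', sub_add_cancel]

lemma mul_rpow_sub_one_le_rpow_sub_rpow_div {q a b : ℝ} (hq0 : 0 ≤ q) (hq1 : q ≤ 1)
    (hb : 0 ≤ b) (hba : b < a) :
    q * a ^ (q - 1) ≤ (a ^ q - b ^ q) / (a - b) := by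
  have ha : 0 < a := hb.trans_lt hba
  simpa [slope_def_field] using
    (concaveOn_rpow hq0 hq1).le_slope_of_hasDerivAt hb ha.le hba
      (hasDerivAt_rpow_const (Or.inl ha.ne'))

lemma mul_rpow_sub_one_le_rpow_add_rpow_div {q a x : ℝ} (hq1 : q ≤ 1) (ha : 0 < a)
    (hx : 0 ≤ x) (hxa : x ≤ a) :
    q * a ^ (q - 1) ≤ (a ^ q + x ^ q) / (a + x) := by
  rw [le_div_iff₀ (by linarith)]
  have hpow : 0 ≤ a ^ (q - 1) * (a + x) := by positivity
  calc q * a ^ (q - 1) * (a + x) ≤ a ^ (q - 1) * (a + x) := by nlinarith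
    _ = a * a ^ (q - 1) + x * a ^ (q - 1) := by ring
    _ ≤ a ^ q + x ^ q := add_le_add (mul_rpow_sub_one_le_rpow hq1 ha.le le_rfl)
        (mul_rpow_sub_one_le_rpow hq1 hx hxa)

lemma mul_rpow_sub_one_le_sign_mul_rpow_sub_div {q a b : ℝ} (hq0 : 0 < q) (hq1 : q ≤ 1)
    (ha : 0 < a) (hba : |b| ≤ a) (hne : a ≠ b) :
    q * a ^ (q - 1) ≤ (sign a * a ^ q - sign b * |b| ^ q) / (a - b) := by
  rw [sign_of_pos ha, one_mul]
  rcases lt_or_ge 0 b with hb | hb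
  · rw [abs_of_pos hb] at hba ⊢
    rw [sign_of_pos hb, one_mul]
    exact mul_rpow_sub_one_le_rpow_sub_rpow_div hq0.le hq1 hb.le (hba.lt_of_ne' hne)
  · have hfb : sign b * |b| ^ q = -(-b) ^ q := by
      rcases hb.lt_or_eq with hb | rfl
      · rw [sign_of_neg hb, abs_of_neg hb, neg_one_mul]
      · simp [zero_rpow hq0.ne']
    rw [abs_of_nonpos hb] at hba
    rw [hfb, sub_neg_eq_add, sub_eq_add_neg]
    exact mul_rpow_sub_one_le_rpow_add_rpow_div hq1 ha (neg_nonneg.2 hb) hba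

end Real

theorem stmt_17_general (q : ℝ) (hq0 : 0 < q) (hq1 : q ≤ 1)
    (a b : ℝ) (hab : |b| ≤ |a|) (hne : a ≠ b) :
    q * |a| ^ (q - 1) ≤ (Real.sign a * |a| ^ q - Real.sign b * |b| ^ q) / (a - b) := by
  have ha : a ≠ 0 := by
    rintro rfl
    exact hne (abs_nonpos_iff.1 (hab.trans_eq abs_zero)).symm
  rcases ha.lt_or_gt with ha | ha
  · have key := mul_rpow_sub_one_le_sign_mul_rpow_sub_div hq0 hq1 (neg_pos.2 ha)
      (by rwa [abs_neg, ← abs_of_neg ha]) (neg_injective.ne hne)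
    rw [abs_of_neg ha]
    convert key using 1
    rw [sign_neg, sign_neg, abs_neg, ← neg_div_neg_eq]
    ring_nf
  · rw [abs_of_pos ha] at hab ⊢
    exact mul_rpow_sub_one_le_sign_mul_rpow_sub_div hq0 hq1 ha hab hne

/-- For `q ∈ (0,1]` and nonzero reals `a, b` with `|a| ≥ |b|` and `a ≠ b`,
the divided difference `(sgn(a)|a|^q − sgn(b)|b|^q)/(a − b)` is at least `q·|a|^{q−1}`. -/
theorem stmt_17 (q : ℝ) (hq0 : 0 < q) (hq1 : q ≤ 1)
    (a b : ℝ) (ha : a ≠ 0) (hb : b ≠ 0) (hab : |b| ≤ |a|) (hne : a ≠ b) :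
    q * |a| ^ (q - 1) ≤ (Real.sign a * |a| ^ q - Real.sign b * |b| ^ q) / (a - b) :=
  stmt_17_general q hq0 hq1 a b hab hne
end
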